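/- arXiv:2512.08525 — 2 statements merged into one kernel-verified Lean document; each statement's English description precedes it below -/
import Mathlib

section
/- Let A be a unital C*-algebra, H = H* ∈ A, and φ : A → A completely positive. Define L(a) = i[H,a] + φ(a) − (1/2){φ(1), a}. Then L is a *-map (L(a*) = L(a)*), L(1) = 0, and L satisfies the dissipation inequality D_L(x) = L(x*x) − L(x*)x − x*L(x) ≥ 0 for all x ∈ A. -/
open Matrix

/-- Complete positivity of a linear endomorphism of a C*-algebra. -/
def IsCompletelyPositive {A : Type*} [NormedRing A] [StarRing A]
    [NormedAlgebra ℂ A] (Φ : A →ₗ[ℂ] A) : Prop :=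
  ∀ (n : ℕ) (X : Matrix (Fin n) (Fin n) A),
    (∃ B : Matrix (Fin n) (Fin n) A, X = Bᴴ * B) →
    ∃ C : Matrix (Fin n) (Fin n) A, X.map Φ = Cᴴ * C

/-- A completely positive map is star-preserving. -/
lemma IsCompletelyPositive.star_map {A : Type*} [NormedRing A] [StarRing A]
    [NormedAlgebra ℂ A] (φ : A →ₗ[ℂ] A) (hφ : IsCompletelyPositive φ) (a : A) :
    φ (star a) = star (φ a) := by
  obtain ⟨C, hC⟩ := hφ 2 !![1, a; star a, star a * a]
    ⟨!![1, a; 0, 0], by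
      ext i j
      fin_cases i <;> fin_cases j <;>
        simp [Matrix.mul_apply, Fin.sum_univ_two]⟩
  have h1 : φ (star a) = (Cᴴ * C) 1 0 := by
    rw [← hC]; simp [Matrix.map_apply]
  have h2 : φ a = (Cᴴ * C) 0 1 := by
    rw [← hC]; simp [Matrix.map_apply]
  rw [h1, h2]
  simp [Matrix.mul_apply, Matrix.conjTranspose_apply, Fin.sum_univ_two]

/-- A Lindblad-form generator `L a = i[H,a] + φ a - (1/2){φ 1, a}` with `φ`
completely positive and `H` self-adjoint is a `*`-map, annihilates the unit
and has the dissipation property. -/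
theorem lindblad_form_is_dissipative
    {A : Type*} [NormedRing A] [StarRing A] [CStarRing A] [CompleteSpace A]
    [NormedAlgebra ℂ A] [StarModule ℂ A] [PartialOrder A] [StarOrderedRing A]
    (H : A) (hH : IsSelfAdjoint H)
    (φ : A →ₗ[ℂ] A) (hφ : IsCompletelyPositive φ)
    (L : A →ₗ[ℂ] A)
    (hL : ∀ a : A,
      L a = Complex.I • (H * a - a * H) + φ a
              - (1 / 2 : ℂ) • (φ 1 * a + a * φ 1)) :
    (∀ a : A, L (star a) = star (L a)) ∧ L 1 = 0 ∧
      ∀ x : A, 0 ≤ L (star x * x) - L (star x) * x - star x * L x := by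
  have hstar := hφ.star_map
  have hK : star (φ 1) = φ 1 := by
    have := hstar 1; rw [star_one] at this; rw [← this]
  refine ⟨?_, ?_, ?_⟩
  · intro a
    rw [hL, hL]
    simp only [star_sub, star_add, star_smul, StarMul.star_mul, hH.star_eq, hK,
      hstar, Complex.star_def, Complex.conj_I, map_div₀, _root_.map_one, map_ofNat]
    module
  · rw [hL]
    simp only [mul_one, one_mul, sub_self, smul_zero, zero_add]
    module
  · intro x
    have hD : L (star x * x) - L (star x) * x - star x * L x =
        φ (star x * x) - φ (star x) * x - star x * φ x + star x * φ 1 * x := by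
      rw [hL, hL, hL]
      simp only [smul_sub, smul_add, sub_mul, add_mul, mul_sub, mul_add,
        smul_mul_assoc, mul_smul_comm, mul_assoc]
      module
    obtain ⟨C, hC⟩ := hφ 2 !![1, x; star x, star x * x]
      ⟨!![1, x; 0, 0], by
        ext i j
        fin_cases i <;> fin_cases j <;>
          simp [Matrix.mul_apply, Fin.sum_univ_two]⟩
    have h00 : φ (1:A) = star (C 0 0) * C 0 0 + star (C 1 0) * C 1 0 := by
      have := congrFun (congrFun hC 0) 0
      simpa [Matrix.map_apply, Matrix.mul_apply, Matrix.conjTranspose_apply,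
        Fin.sum_univ_two] using this
    have h01 : φ x = star (C 0 0) * C 0 1 + star (C 1 0) * C 1 1 := by
      have := congrFun (congrFun hC 0) 1
      simpa [Matrix.map_apply, Matrix.mul_apply, Matrix.conjTranspose_apply,
        Fin.sum_univ_two] using this
    have h10 : φ (star x) = star (C 0 1) * C 0 0 + star (C 1 1) * C 1 0 := by
      have := congrFun (congrFun hC 1) 0
      simpa [Matrix.map_apply, Matrix.mul_apply, Matrix.conjTranspose_apply,
        Fin.sum_univ_two] using this
    have h11 : φ (star x * x) = star (C 0 1) * C 0 1 + star (C 1 1) * C 1 1 := by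
      have := congrFun (congrFun hC 1) 1
      simpa [Matrix.map_apply, Matrix.mul_apply, Matrix.conjTranspose_apply,
        Fin.sum_univ_two] using this
    have key : L (star x * x) - L (star x) * x - star x * L x =
        star (C 0 1 - C 0 0 * x) * (C 0 1 - C 0 0 * x) +
        star (C 1 1 - C 1 0 * x) * (C 1 1 - C 1 0 * x) := by
      rw [hD, h00, h01, h10, h11]
      simp only [star_sub, StarMul.star_mul]
      noncomm_ring
    rw [key]
    exact add_nonneg (star_mul_self_nonneg _) (star_mul_self_nonneg _)
end

section
/- Let H be a Hilbert space, A ⊆ B(H) a unital C*-subalgebra, and suppose φ(a) = V₁* π₁(a) V₁ + V₂* π₂(a) V₂, where π₁ : A → B(K₁) is a unital *-homomorphism, π₂ : A → B(K₂) is a unital *-antihomomorphism, and V₁ : H → K₁, V₂ : H → K₂ are bounded linear operators. Define L₁(a) = i[H₀,a] + V₁*π₁(a)V₁ − (1/2){φ(1), a} for a self-adjoint H₀ ∈ A. Then for all x ∈ A, D_{L₁}(x) = (π₁(x)V₁ − V₁x)*(π₁(x)V₁ − V₁x) + (V₂x)*(V₂x) ≥ 0. -/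
open ContinuousLinearMap

/-- For a map `φ a = V₁* π₁(a) V₁ + V₂* π₂(a) V₂` given by a Størmer-type
dilation (with `π₁` a unital `*`-homomorphism and `π₂` a unital
`*`-antihomomorphism), the dissipation function of
`L₁ a = i[H₀, a] + V₁* π₁(a) V₁ - (1/2){φ 1, a}` equals
`(π₁(x)V₁ - V₁ x)* (π₁(x)V₁ - V₁ x) + (V₂ x)* (V₂ x) ≥ 0`. -/
theorem dissipation_of_dilated_generator
    {H K₁ K₂ : Type*}
    [NormedAddCommGroup H] [InnerProductSpace ℂ H] [CompleteSpace H]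
    [NormedAddCommGroup K₁] [InnerProductSpace ℂ K₁] [CompleteSpace K₁]
    [NormedAddCommGroup K₂] [InnerProductSpace ℂ K₂] [CompleteSpace K₂]
    (S : StarSubalgebra ℂ (H →L[ℂ] H))
    (π₁ : S →⋆ₐ[ℂ] (K₁ →L[ℂ] K₁))
    (π₂ : S →ₗ[ℂ] (K₂ →L[ℂ] K₂))
    (hπ₂anti : ∀ a b : S, π₂ (a * b) = π₂ b * π₂ a)
    (hπ₂star : ∀ a : S, π₂ (star a) = star (π₂ a))
    (hπ₂one : π₂ 1 = 1)
    (V₁ : H →L[ℂ] K₁) (V₂ : H →L[ℂ] K₂)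
    (H₀ : S) (hH₀ : IsSelfAdjoint H₀)
    (φ : S → (H →L[ℂ] H))
    (hφ : ∀ a : S,
      φ a = (adjoint V₁).comp ((π₁ a).comp V₁) +
            (adjoint V₂).comp ((π₂ a).comp V₂))
    (L₁ : S → (H →L[ℂ] H))
    (hL₁ : ∀ a : S,
      L₁ a = Complex.I • ((H₀ : H →L[ℂ] H) * (a : H →L[ℂ] H)
                - (a : H →L[ℂ] H) * (H₀ : H →L[ℂ] H))
             + (adjoint V₁).comp ((π₁ a).comp V₁)
             - (1 / 2 : ℂ) • (φ 1 * (a : H →L[ℂ] H)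
                + (a : H →L[ℂ] H) * φ 1)) :
    ∀ x : S,
      L₁ (star x * x) - L₁ (star x) * (x : H →L[ℂ] H)
          - (star x : H →L[ℂ] H) * L₁ x =
        (adjoint ((π₁ x).comp V₁ - V₁.comp (x : H →L[ℂ] H))).comp
            ((π₁ x).comp V₁ - V₁.comp (x : H →L[ℂ] H)) +
          (adjoint (V₂.comp (x : H →L[ℂ] H))).comp
            (V₂.comp (x : H →L[ℂ] H)) ∧
      (L₁ (star x * x) - L₁ (star x) * (x : H →L[ℂ] H)
          - (star x : H →L[ℂ] H) * L₁ x).IsPositive := by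
  intro x
  have key :
      L₁ (star x * x) - L₁ (star x) * (x : H →L[ℂ] H)
          - (star x : H →L[ℂ] H) * L₁ x =
        (adjoint ((π₁ x).comp V₁ - V₁.comp (x : H →L[ℂ] H))).comp
            ((π₁ x).comp V₁ - V₁.comp (x : H →L[ℂ] H)) +
          (adjoint (V₂.comp (x : H →L[ℂ] H))).comp
            (V₂.comp (x : H →L[ℂ] H)) := by
    simp only [hL₁, hφ, map_mul, map_star, map_one, hπ₂one,
      MulMemClass.coe_mul, StarMemClass.coe_star,
      ContinuousLinearMap.star_eq_adjoint, adjoint_comp, adjoint_adjoint, map_sub,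
      ContinuousLinearMap.mul_def, ContinuousLinearMap.one_def,
      ContinuousLinearMap.id_comp, ContinuousLinearMap.comp_id,
      ContinuousLinearMap.comp_add, ContinuousLinearMap.add_comp,
      ContinuousLinearMap.comp_sub, ContinuousLinearMap.sub_comp,
      ContinuousLinearMap.comp_smul, ContinuousLinearMap.smul_comp,
      ContinuousLinearMap.comp_assoc]
    module
  refine ⟨key, ?_⟩
  rw [key]
  have h1 := (isPositive_one (𝕜 := ℂ) (E := K₁)).adjoint_conj
    ((π₁ x).comp V₁ - V₁.comp (x : H →L[ℂ] H))
  have h2 := (isPositive_one (𝕜 := ℂ) (E := K₂)).adjoint_conj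
    (V₂.comp (x : H →L[ℂ] H))
  simp only [ContinuousLinearMap.comp_id, ContinuousLinearMap.id_comp,
    ContinuousLinearMap.one_def] at h1 h2
  exact h1.add h2
end
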